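/- Let Q₀ ∈ ℝ^{m×q} have orthonormal columns, R₀ ∈ ℝ^{q×q} upper triangular with Q₀ R₀ = A₀, and let A₁ ∈ ℝ^{m×p}. Suppose R ∈ ℝ^{p×p} is upper triangular with positive diagonal and satisfies Rᵀ R = A₁ᵀ A₁ − A₁ᵀ Q₀ Q₀ᵀ A₁. Define Q := (A₁ − Q₀ Q₀ᵀ A₁) R⁻¹, Q_out := [Q₀, Q], and R_out := [[R₀, Q₀ᵀ A₁], [0, R]]. Then Q_out R_out = [A₀, A₁], R_out is upper triangular, and Q_out has orthonormal columns. -/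

import Mathlib

open Matrix

/-- QR updating via Cholesky: given an existing QR decomposition `Q₀ R₀ = A₀`
and new columns `A₁`, if `R` is an upper triangular Cholesky factor (with
positive diagonal) of the residual Gramian `A₁ᵀA₁ - A₁ᵀQ₀Q₀ᵀA₁`, then the block
matrices `Q_out = [Q₀, Q]` (with `Q = (A₁ - Q₀Q₀ᵀA₁) R⁻¹`) and
`R_out = [[R₀, Q₀ᵀA₁],[0, R]]` form a QR decomposition of `[A₀, A₁]`. -/
theorem cholesky_qr_update {m q p : ℕ}
    (A₀ : Matrix (Fin m) (Fin q) ℝ) (A₁ : Matrix (Fin m) (Fin p) ℝ)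
    (Q₀ : Matrix (Fin m) (Fin q) ℝ) (R₀ : Matrix (Fin q) (Fin q) ℝ)
    (hQ₀ : Q₀ᵀ * Q₀ = 1) (hR₀ : R₀.BlockTriangular id) (hQR : Q₀ * R₀ = A₀)
    (R : Matrix (Fin p) (Fin p) ℝ)
    (hRtri : R.BlockTriangular id) (hRpos : ∀ i, 0 < R i i)
    (hchol : Rᵀ * R = A₁ᵀ * A₁ - A₁ᵀ * Q₀ * Q₀ᵀ * A₁) :
    let Q := (A₁ - Q₀ * (Q₀ᵀ * A₁)) * R⁻¹
    let Qout := Matrix.fromCols Q₀ Q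
    let Rout := Matrix.fromBlocks R₀ (Q₀ᵀ * A₁) 0 R
    Qout * Rout = Matrix.fromCols A₀ A₁ ∧
      Rout.BlockTriangular
        (Sum.elim (fun i : Fin q => (i : ℕ)) (fun j : Fin p => q + (j : ℕ))) ∧
      Qoutᵀ * Qout = 1 := by
  intro Q Qout Rout
  set B := Q₀ᵀ * A₁ with hBdef
  have hdet : IsUnit R.det := by
    rw [Matrix.det_of_upperTriangular hRtri]
    exact (Finset.prod_pos fun i _ => hRpos i).ne'.isUnit
  have hRR : R * R⁻¹ = 1 := Matrix.mul_nonsing_inv R hdet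
  have hRR' : R⁻¹ * R = 1 := Matrix.nonsing_inv_mul R hdet
  have hQR' : Q * R = A₁ - Q₀ * B := by
    show (A₁ - Q₀ * B) * R⁻¹ * R = A₁ - Q₀ * B
    rw [Matrix.mul_assoc, hRR', Matrix.mul_one]
  have hQ0Q : Q₀ᵀ * Q = 0 := by
    show Q₀ᵀ * ((A₁ - Q₀ * B) * R⁻¹) = 0
    rw [← Matrix.mul_assoc, Matrix.mul_sub, ← Matrix.mul_assoc, hQ₀, Matrix.one_mul,
      ← hBdef, sub_self, Matrix.zero_mul]
  have hB' : Bᵀ = A₁ᵀ * Q₀ := by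
    rw [hBdef, Matrix.transpose_mul, Matrix.transpose_transpose]
  have hgram : (A₁ - Q₀ * B)ᵀ * (A₁ - Q₀ * B) = Rᵀ * R := by
    have hPP : (Q₀ * B)ᵀ * (Q₀ * B) = Bᵀ * B := by
      rw [Matrix.transpose_mul, Matrix.mul_assoc, ← Matrix.mul_assoc Q₀ᵀ, hQ₀, Matrix.one_mul]
    have hAP : A₁ᵀ * (Q₀ * B) = Bᵀ * B := by
      rw [← Matrix.mul_assoc, ← hB']
    have hPA : (Q₀ * B)ᵀ * A₁ = Bᵀ * B := by
      rw [Matrix.transpose_mul, Matrix.mul_assoc, ← hBdef]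
    have hrhs : A₁ᵀ * A₁ - A₁ᵀ * Q₀ * Q₀ᵀ * A₁ = A₁ᵀ * A₁ - Bᵀ * B := by
      rw [hB', Matrix.mul_assoc, ← hBdef]
    rw [hchol, hrhs, Matrix.transpose_sub, Matrix.sub_mul, Matrix.mul_sub, Matrix.mul_sub,
      hPP, hAP, hPA]
    abel
  have hQQ : Qᵀ * Q = 1 := by
    show ((A₁ - Q₀ * B) * R⁻¹)ᵀ * ((A₁ - Q₀ * B) * R⁻¹) = 1
    rw [Matrix.transpose_mul, Matrix.mul_assoc, ← Matrix.mul_assoc ((A₁ - Q₀ * B)ᵀ), hgram]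
    rw [Matrix.mul_assoc Rᵀ, hRR, Matrix.mul_one, ← Matrix.transpose_mul, hRR, Matrix.transpose_one]
  refine ⟨?_, ?_, ?_⟩
  · show fromCols Q₀ Q * fromBlocks R₀ B 0 R = fromCols A₀ A₁
    rw [fromCols_mul_fromBlocks, Matrix.mul_zero, add_zero, hQR, hQR']
    rw [add_sub_cancel]
  · show (fromBlocks R₀ B 0 R).BlockTriangular _
    rintro (i | i) (j | j) h <;>
      simp only [Sum.elim_inl, Sum.elim_inr, fromBlocks_apply₁₁, fromBlocks_apply₁₂,
        fromBlocks_apply₂₁, fromBlocks_apply₂₂, Matrix.zero_apply] at h ⊢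
    · exact hR₀ (by exact_mod_cast h)
    · exact absurd h (by have := i.isLt; omega)
    · exact hRtri (show (j : ℕ) < (i : ℕ) by omega)
  · show (fromCols Q₀ Q)ᵀ * fromCols Q₀ Q = 1
    rw [transpose_fromCols, fromRows_mul_fromCols]
    have hQQ0 : Qᵀ * Q₀ = 0 := by
      have := congrArg Matrix.transpose hQ0Q
      simpa [Matrix.transpose_mul] using this
    ext (i | i) (j | j) <;>
      simp [hQ₀, hQQ, hQ0Q, hQQ0, Matrix.one_apply]
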